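/- arXiv:2001.10745 — 4 statements merged into one kernel-verified Lean document; each statement's English description precedes it below -/
import Mathlib

section
/- Let f̃, g̃ be torus functions with absolutely summable Fourier coefficients and let k ∈ ℝ^d. Then P₀[f̃·g̃ − (H f̃)·(H g̃)] = Σ_{j∈ℤ^d, ⟨j,k⟩=0} f̂_j ĝ_{−j}, where the sum is over all lattice points j with ⟨j,k⟩ = 0. -/
/-!
Multiplying two absolutely convergent Fourier series and integrating term by term over the cube,
orthogonality of the characters `e^{i⟨j,α⟩}` gives `P₀[f g] = Σ_j f̂_j ĝ_{-j}`. The coefficients of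
`Hf, Hg` are `-i sgn⟨j,k⟩ f̂_j` and `-i sgn⟨j,k⟩ ĝ_j`; since `sgn⟨-j,k⟩ = -sgn⟨j,k⟩`, the `j`-th
term of `P₀[(Hf)(Hg)]` is `sgn²⟨j,k⟩ f̂_j ĝ_{-j}`, which cancels the `j`-th term of `P₀[f g]`
exactly off the hyperplane `⟨j,k⟩ = 0`.
-/

open MeasureTheory

namespace TorusFourier

open Real

variable {ι : Type*} [Fintype ι]

noncomputable def torusChar (j : ι → ℤ) (α : ι → ℝ) : ℂ :=
  Complex.exp (Complex.I * ((∑ i, (j i : ℝ) * α i : ℝ) : ℂ))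

lemma norm_torusChar (j : ι → ℤ) (α : ι → ℝ) : ‖torusChar j α‖ = 1 := by
  rw [torusChar, mul_comm]
  exact Complex.norm_exp_ofReal_mul_I _

lemma continuous_torusChar (j : ι → ℤ) : Continuous (torusChar j) := by
  unfold torusChar
  fun_prop

lemma torusChar_add (j l : ι → ℤ) (α : ι → ℝ) :
    torusChar (j + l) α = torusChar j α * torusChar l α := by
  simp only [torusChar, ← Complex.exp_add, Pi.add_apply, Int.cast_add, add_mul,
    Finset.sum_add_distrib, Complex.ofReal_add, mul_add]

lemma torusChar_eq_prod (j : ι → ℤ) (α : ι → ℝ) :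
    torusChar j α = ∏ i, Complex.exp (Complex.I * (((j i : ℝ) * α i : ℝ) : ℂ)) := by
  rw [torusChar, ← Complex.exp_sum, Complex.ofReal_sum, Finset.mul_sum]

lemma setIntegral_Icc_exp_int_mul_I (m : ℤ) :
    ∫ x in Set.Icc 0 (2 * π), Complex.exp (Complex.I * (((m : ℝ) * x : ℝ) : ℂ)) =
      if m = 0 then ((2 * π : ℝ) : ℂ) else 0 := by
  rw [integral_Icc_eq_integral_Ioc, ← intervalIntegral.integral_of_le (by positivity)]
  split_ifs with hm
  · simp [hm]
  have hc : Complex.I * m ≠ 0 := mul_ne_zero Complex.I_ne_zero (by exact_mod_cast hm)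
  have hperiod : Complex.exp (Complex.I * m * (2 * π : ℝ)) = 1 := by
    rw [← Complex.exp_int_mul_two_pi_mul_I m]
    push_cast
    ring_nf
  simp_rw [Complex.ofReal_mul, ← mul_assoc, Complex.ofReal_intCast]
  rw [integral_exp_mul_complex hc, hperiod]
  simp

lemma setIntegral_torusChar (j : ι → ℤ) :
    ∫ α in Set.univ.pi fun _ : ι => Set.Icc 0 (2 * π), torusChar j α =
      if j = 0 then (((2 * π) ^ Fintype.card ι : ℝ) : ℂ) else 0 := by
  simp_rw [torusChar_eq_prod]
  rw [volume_pi, Measure.restrict_pi_pi,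
    integral_fintype_prod_eq_prod fun i x => Complex.exp (Complex.I * (((j i : ℝ) * x : ℝ) : ℂ))]
  simp_rw [setIntegral_Icc_exp_int_mul_I]
  split_ifs with hj
  · simp [hj]
  · obtain ⟨i, hi⟩ := Function.ne_iff.mp hj
    exact Finset.prod_eq_zero (Finset.mem_univ i) (if_neg hi)

lemma tsum_ite_add_eq_zero {G M : Type*} [AddGroup G] [DecidableEq G] [AddCommMonoid M]
    [TopologicalSpace M] (c : G × G → M) :
    ∑' p : G × G, (if p.1 + p.2 = 0 then c p else 0) = ∑' g, c (g, -g) := by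
  refine (Function.Injective.tsum_eq (g := fun g : G => (g, -g))
    (fun _ _ h => congrArg Prod.fst h) ?_).symm.trans (tsum_congr fun g => by simp)
  intro p hp
  have hp : p.1 + p.2 = 0 := by_contra fun h => hp (if_neg h)
  exact ⟨p.1, Prod.ext rfl (neg_eq_of_add_eq_zero_right hp)⟩

lemma summable_mul_comp_neg {G R : Type*} [InvolutiveNeg G] [NormedRing R] [CompleteSpace R]
    {a b : G → R} (ha : Summable fun g => ‖a g‖) (hb : Summable fun g => ‖b g‖) :
    Summable fun g => a g * b (-g) :=
  (summable_mul_of_summable_norm ha hb).comp_injective (i := fun g => (g, -g))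
    fun _ _ h => congrArg Prod.fst h

variable {a b : (ι → ℤ) → ℂ}

lemma summable_norm_mul_torusChar (ha : Summable fun j => ‖a j‖) (α : ι → ℝ) :
    Summable fun j => ‖a j * torusChar j α‖ := by
  simpa only [norm_mul, norm_torusChar, mul_one] using ha

lemma continuous_fourierSeries (ha : Summable fun j => ‖a j‖) :
    Continuous fun α => ∑' j, a j * torusChar j α :=
  continuous_tsum (fun j => continuous_const.mul (continuous_torusChar j)) ha
    fun j α => by rw [norm_mul, norm_torusChar, mul_one]

lemma fourierSeries_mul_fourierSeries (ha : Summable fun j => ‖a j‖)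
    (hb : Summable fun j => ‖b j‖) (α : ι → ℝ) :
    (∑' j, a j * torusChar j α) * (∑' j, b j * torusChar j α) =
      ∑' p : (ι → ℤ) × (ι → ℤ), a p.1 * b p.2 * torusChar (p.1 + p.2) α := by
  rw [tsum_mul_tsum_of_summable_norm (summable_norm_mul_torusChar ha α)
    (summable_norm_mul_torusChar hb α)]
  exact tsum_congr fun p => by rw [torusChar_add]; ring

lemma integrableOn_fourierSeries_mul (ha : Summable fun j => ‖a j‖)
    (hb : Summable fun j => ‖b j‖) :
    IntegrableOn (fun α => (∑' j, a j * torusChar j α) * (∑' j, b j * torusChar j α))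
      (Set.univ.pi fun _ : ι => Set.Icc 0 (2 * π)) :=
  ((continuous_fourierSeries ha).mul (continuous_fourierSeries hb)).continuousOn
    |>.integrableOn_compact (isCompact_univ_pi fun _ => isCompact_Icc)

lemma setIntegral_fourierSeries_mul (ha : Summable fun j => ‖a j‖)
    (hb : Summable fun j => ‖b j‖) :
    ∫ α in Set.univ.pi fun _ : ι => Set.Icc 0 (2 * π),
        (∑' j, a j * torusChar j α) * (∑' j, b j * torusChar j α) =
      (((2 * π) ^ Fintype.card ι : ℝ) : ℂ) * ∑' j, a j * b (-j) := by
  have hcube : IsCompact (Set.univ.pi fun _ : ι => Set.Icc 0 (2 * π)) :=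
    isCompact_univ_pi fun _ => isCompact_Icc
  simp_rw [fourierSeries_mul_fourierSeries ha hb]
  rw [← integral_tsum_of_summable_integral_norm]
  · simp_rw [integral_const_mul, setIntegral_torusChar, mul_ite, mul_zero]
    rw [tsum_ite_add_eq_zero (fun p => a p.1 * b p.2 * (((2 * π) ^ Fintype.card ι : ℝ) : ℂ)),
      tsum_mul_right, mul_comm]
  · exact fun p =>
      (continuous_const.mul (continuous_torusChar _)).continuousOn.integrableOn_compact hcube
  · simp_rw [norm_mul, norm_torusChar, mul_one, integral_const, smul_eq_mul]
    exact (ha.mul_of_nonneg hb (fun _ => norm_nonneg _) fun _ => norm_nonneg _).mul_left _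

lemma norm_neg_I_mul_sign_mul_le (x : ℝ) (z : ℂ) :
    ‖-Complex.I * (Real.sign x : ℂ) * z‖ ≤ ‖z‖ := by
  rcases Real.sign_apply_eq x with h | h | h <;> simp [h]

lemma mul_sub_hilbert_mul_hilbert (x : ℝ) (z w : ℂ) :
    z * w - (-Complex.I * (Real.sign x : ℂ) * z) * (-Complex.I * (Real.sign (-x) : ℂ) * w) =
      if x = 0 then z * w else 0 := by
  rw [Real.sign_neg]
  rcases lt_trichotomy x 0 with hx | rfl | hx
  · rw [Real.sign_of_neg hx, if_neg hx.ne]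
    push_cast
    linear_combination z * w * Complex.I_sq
  · simp
  · rw [Real.sign_of_pos hx, if_neg hx.ne']
    push_cast
    linear_combination z * w * Complex.I_sq

end TorusFourier

open TorusFourier in
/-- For torus functions `f, g` with absolutely summable Fourier coefficients
and `k ∈ ℝ^d`, the mean value of `f·g − (Hf)·(Hg)` equals
`Σ_{⟨j,k⟩=0} f̂_j ĝ_{−j}`, where `H` is the Fourier multiplier with
symbol `−i·sgn(⟨j,k⟩)`. -/
theorem stmt4 (d : ℕ) (k : Fin d → ℝ)
    (fhat ghat : (Fin d → ℤ) → ℂ)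
    (hfsum : Summable fun j : Fin d → ℤ => ‖fhat j‖)
    (hgsum : Summable fun j : Fin d → ℤ => ‖ghat j‖)
    (f g Hf Hg : (Fin d → ℝ) → ℂ)
    (hf : ∀ α, f α = ∑' j : Fin d → ℤ,
      fhat j * Complex.exp (Complex.I * ((∑ i, (j i : ℝ) * α i : ℝ) : ℂ)))
    (hg : ∀ α, g α = ∑' j : Fin d → ℤ,
      ghat j * Complex.exp (Complex.I * ((∑ i, (j i : ℝ) * α i : ℝ) : ℂ)))
    (hHf : ∀ α, Hf α = ∑' j : Fin d → ℤ,
      (-Complex.I) * (Real.sign (∑ i, (j i : ℝ) * k i) : ℂ) * fhat j *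
        Complex.exp (Complex.I * ((∑ i, (j i : ℝ) * α i : ℝ) : ℂ)))
    (hHg : ∀ α, Hg α = ∑' j : Fin d → ℤ,
      (-Complex.I) * (Real.sign (∑ i, (j i : ℝ) * k i) : ℂ) * ghat j *
        Complex.exp (Complex.I * ((∑ i, (j i : ℝ) * α i : ℝ) : ℂ))) :
    ((1 / (2 * Real.pi) ^ d : ℝ) : ℂ) *
      ∫ α in Set.pi Set.univ (fun _ : Fin d => Set.Icc (0 : ℝ) (2 * Real.pi)),
        (f α * g α - Hf α * Hg α) =
    ∑' j : {j : Fin d → ℤ // (∑ i, (j i : ℝ) * k i) = 0}, fhat j.1 * ghat (-j.1) := by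
  set σ : (Fin d → ℤ) → ℂ := fun j => -Complex.I * (Real.sign (∑ i, (j i : ℝ) * k i) : ℂ)
  have hHfsum : Summable fun j => ‖σ j * fhat j‖ :=
    hfsum.of_nonneg_of_le (fun _ => norm_nonneg _) fun _ => norm_neg_I_mul_sign_mul_le _ _
  have hHgsum : Summable fun j => ‖σ j * ghat j‖ :=
    hgsum.of_nonneg_of_le (fun _ => norm_nonneg _) fun _ => norm_neg_I_mul_sign_mul_le _ _
  obtain rfl : f = fun α => ∑' j, fhat j * torusChar j α := funext hf
  obtain rfl : g = fun α => ∑' j, ghat j * torusChar j α := funext hg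
  obtain rfl : Hf = fun α => ∑' j, σ j * fhat j * torusChar j α := funext hHf
  obtain rfl : Hg = fun α => ∑' j, σ j * ghat j * torusChar j α := funext hHg
  have hneg (j : Fin d → ℤ) : ∑ i, ((-j) i : ℝ) * k i = -∑ i, (j i : ℝ) * k i := by
    simp [Finset.sum_neg_distrib]
  beta_reduce
  rw [integral_sub (integrableOn_fourierSeries_mul hfsum hgsum)
      (integrableOn_fourierSeries_mul hHfsum hHgsum),
    setIntegral_fourierSeries_mul hfsum hgsum, setIntegral_fourierSeries_mul hHfsum hHgsum,
    ← mul_sub, ← mul_assoc, ← Complex.ofReal_mul, Fintype.card_fin,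
    one_div_mul_cancel (by positivity), Complex.ofReal_one, one_mul,
    ← (summable_mul_comp_neg hfsum hgsum).tsum_sub (summable_mul_comp_neg hHfsum hHgsum)]
  refine (tsum_congr fun j => ?_).trans
    (tsum_subtype {j | ∑ i, (j i : ℝ) * k i = 0} fun j => fhat j * ghat (-j)).symm
  simp only [σ, hneg, mul_sub_hilbert_mul_hilbert, Set.indicator_apply, Set.mem_ofPred_eq]
end

section
/- Let ζ : ℝ → ℂ be a C¹ curve with |ζ(α) − α| ≤ M, and let z₀, z₁ ∈ ℂ be points such that the line segment [z₀,z₁] does not intersect the curve ζ(ℝ). If the limit n₁(z₀) = lim_{a→∞} (1/(2πi)) ∫_{−a}^{a} ζ'(α)/(ζ(α)−z₀) dα exists, then n₁(z₁) exists and n₁(z₁) = n₁(z₀). -/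
/-!
Along the curve, `log ((ζ - z₁) / (ζ - z₀))` is a primitive of `ζ' / (ζ - z₁) - ζ' / (ζ - z₀)`:
the ratio lies in the slit plane precisely because `ζ` never meets `[z₀, z₁]`. Hence the two
truncated integrals differ by a boundary term in the principal logarithm, and that term tends
to `log 1 = 0` because `|ζ(α) − α| ≤ M` forces `ζ(±a) → ∞`.
-/

open Filter Bornology Topology

theorem div_sub_mem_slitPlane_of_notMem_segment {w z₀ z₁ : ℂ} (hw : w ∉ segment ℝ z₀ z₁) :
    (w - z₁) / (w - z₀) ∈ Complex.slitPlane := by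
  have h₀ : w - z₀ ≠ 0 := sub_ne_zero.2 fun e => hw (e ▸ left_mem_segment ℝ z₀ z₁)
  rw [Complex.mem_slitPlane_iff_not_le_zero, Complex.nonpos_iff]
  rintro ⟨hre, him⟩
  obtain ⟨t, ht, hratio⟩ : ∃ t : ℝ, 0 ≤ t ∧ w - z₁ = -t * (w - z₀) := by
    refine ⟨-((w - z₁) / (w - z₀)).re, by linarith, ?_⟩
    rw [← div_eq_iff h₀]
    apply Complex.ext <;> simp [him]
  have ht₁ : (t + 1 : ℂ) ≠ 0 := by exact_mod_cast (by positivity : (t + 1 : ℝ) ≠ 0)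
  -- `w - z₁ = -t (w - z₀)` exhibits `w` as the convex combination `(t z₀ + z₁) / (t + 1)`.
  refine hw ⟨t / (t + 1), 1 / (t + 1), by positivity, by positivity, by field_simp, ?_⟩
  simp only [Complex.real_smul]
  push_cast
  field_simp
  linear_combination -hratio

theorem HasDerivAt.clog_div_sub {f : ℝ → ℂ} {f' : ℂ} {x : ℝ} {z₀ z₁ : ℂ}
    (hf : HasDerivAt f f' x) (hx : f x ∉ segment ℝ z₀ z₁) :
    HasDerivAt (fun t => Complex.log ((f t - z₁) / (f t - z₀)))
      (f' / (f x - z₁) - f' / (f x - z₀)) x := by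
  have h₀ : f x - z₀ ≠ 0 := sub_ne_zero.2 fun e => hx (e ▸ left_mem_segment ℝ z₀ z₁)
  have h₁ : f x - z₁ ≠ 0 := sub_ne_zero.2 fun e => hx (e ▸ right_mem_segment ℝ z₀ z₁)
  have hratio : HasDerivAt (fun t => (f t - z₁) / (f t - z₀))
      ((f' * (f x - z₀) - (f x - z₁) * f') / (f x - z₀) ^ 2) x :=
    (hf.sub_const z₁).div (hf.sub_const z₀) h₀
  convert hratio.clog_real (div_sub_mem_slitPlane_of_notMem_segment hx) using 1
  field_simp

theorem integral_deriv_div_sub_eq_add_clog {ζ : ℝ → ℂ} (hζ : ContDiff ℝ 1 ζ) {z₀ z₁ : ℂ}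
    (hseg : ∀ α, ζ α ∉ segment ℝ z₀ z₁) (a b : ℝ) :
    ∫ α in a..b, deriv ζ α / (ζ α - z₁) =
      (∫ α in a..b, deriv ζ α / (ζ α - z₀)) +
        (Complex.log ((ζ b - z₁) / (ζ b - z₀)) - Complex.log ((ζ a - z₁) / (ζ a - z₀))) := by
  have hint : ∀ z ∈ segment ℝ z₀ z₁,
      IntervalIntegrable (fun α => deriv ζ α / (ζ α - z)) MeasureTheory.volume a b :=
    fun z hz => ((hζ.continuous_deriv le_rfl).div (hζ.continuous.sub continuous_const)
      fun α e => hseg α (sub_eq_zero.1 e ▸ hz)).intervalIntegrable a b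
  have hint₀ := hint z₀ (left_mem_segment ℝ z₀ z₁)
  have hint₁ := hint z₁ (right_mem_segment ℝ z₀ z₁)
  have hFTC := intervalIntegral.integral_eq_sub_of_hasDerivAt
    (fun α _ => HasDerivAt.clog_div_sub ((hζ.differentiable one_ne_zero) α).hasDerivAt (hseg α))
    (hint₁.sub hint₀)
  rw [intervalIntegral.integral_sub hint₁ hint₀] at hFTC
  linear_combination hFTC

theorem tendsto_clog_div_sub_cobounded (z₀ z₁ : ℂ) :
    Tendsto (fun z => Complex.log ((z - z₁) / (z - z₀))) (cobounded ℂ) (𝓝 0) := by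
  have hratio : Tendsto (fun z => 1 + (z₀ - z₁) * (z - z₀)⁻¹) (cobounded ℂ) (𝓝 1) := by
    simpa using (tendsto_inv₀_cobounded.comp (tendsto_sub_const_cobounded z₀)).const_mul
      (z₀ - z₁) |>.const_add 1
  have hratio' : Tendsto (fun z => (z - z₁) / (z - z₀)) (cobounded ℂ) (𝓝 1) := by
    refine hratio.congr' ((eventually_ne_cobounded z₀).mono fun z hz => ?_)
    field_simp [sub_ne_zero.2 hz]
    ring
  simpa [Function.comp_def] using
    (continuousAt_clog Complex.one_mem_slitPlane).tendsto.comp hratio'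

theorem tendsto_cobounded_of_norm_sub_ofReal_le {ζ : ℝ → ℂ} {M : ℝ}
    (hb : ∀ α : ℝ, ‖ζ α - α‖ ≤ M) : Tendsto ζ (cobounded ℝ) (cobounded ℂ) := by
  rw [← tendsto_norm_atTop_iff_cobounded]
  refine tendsto_atTop_mono (fun α => ?_)
    (tendsto_atTop_add_const_right _ (-M) tendsto_norm_cobounded_atTop)
  have := norm_le_norm_add_norm_sub' (α : ℂ) (ζ α)
  rw [norm_sub_rev, Complex.norm_real] at this
  linarith [hb α]

/-- Let `ζ : ℝ → ℂ` be a `C¹` curve with `|ζ(α) − α| ≤ M`, and let `z₀, z₁`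
be points such that the segment `[z₀, z₁]` does not meet the curve. If the
limit `n₁(z₀)` of `(1/(2πi)) ∫_{−a}^{a} ζ'(α)/(ζ(α)−z₀) dα` exists, then
`n₁(z₁)` exists and equals `n₁(z₀)`. -/
theorem stmt9 (M : ℝ) (ζ : ℝ → ℂ) (hC1 : ContDiff ℝ 1 ζ)
    (hb : ∀ α : ℝ, ‖ζ α - (α : ℂ)‖ ≤ M) (z₀ z₁ : ℂ)
    (hseg : ∀ α : ℝ, ζ α ∉ segment ℝ z₀ z₁) (L : ℂ)
    (h0 : Tendsto (fun a : ℝ =>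
        (1 / (2 * (Real.pi : ℂ) * Complex.I)) *
          ∫ α in (-a)..a, deriv ζ α / (ζ α - z₀)) atTop (nhds L)) :
    Tendsto (fun a : ℝ =>
      (1 / (2 * (Real.pi : ℂ) * Complex.I)) *
        ∫ α in (-a)..a, deriv ζ α / (ζ α - z₁)) atTop (nhds L) := by
  have hζ := tendsto_cobounded_of_norm_sub_ofReal_le hb
  have hlog := tendsto_clog_div_sub_cobounded z₀ z₁
  have hboundary : Tendsto (fun a : ℝ =>
      Complex.log ((ζ a - z₁) / (ζ a - z₀)) - Complex.log ((ζ (-a) - z₁) / (ζ (-a) - z₀)))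
      atTop (𝓝 0) := by
    simpa using (hlog.comp (hζ.mono_left IsOrderBornology.atTop_le_cobounded)).sub
      (hlog.comp (hζ.comp (tendsto_neg_atTop_atBot.mono_right
        IsOrderBornology.atBot_le_cobounded)))
  simpa [integral_deriv_div_sub_eq_add_clog hC1 hseg, mul_add] using
    h0.add (hboundary.const_mul (1 / (2 * (Real.pi : ℂ) * Complex.I)))
end

section
/- Suppose z(w) is holomorphic on {Im w < ε}, |z(w) − w| ≤ M there, and ζ = z|_ℝ is injective. Then for z₀ ∉ ζ(ℝ), the number of solutions w in the open lower half-plane of z(w) = z₀ is 1 if z₀ lies in the region below the curve and 0 if z₀ lies in the region above the curve. -/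
/-!
Call a value `v` good if `z w = v` has exactly one solution in the open lower half-plane and
that solution is simple. Off the curve `ζ(ℝ)` goodness is locally constant: near a good value
the local inverse of `z` and the properness of `z` on the closed lower half-plane (a consequence
of `|z(w) - w| ≤ M`) keep the solution unique and simple; near a value with no solution,
properness again gives none; two distinct solutions persist by the open mapping theorem; and
near a critical solution `z = z(w₀) + hⁿ` with `n ≥ 2` and `h` a local coordinate, so every
nearby value has at least two preimages. Far below the curve `z - id` is a `1/2`-contraction by
the Cauchy estimate, so values there are good, hence so is every value of the lower component.
Likewise, having some solution in the lower half-plane is locally constant off the curve, and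
`(M + 1) i` has none since `Im z ≤ M` on the closed lower half-plane.
-/

open Set Filter Metric Complex
open scoped Topology

theorem IsPreconnected.iff_of_eventually_iff {α : Type*} [TopologicalSpace α] {s : Set α}
    (hs : IsPreconnected s) {p : α → Prop} (h : ∀ x ∈ s, ∀ᶠ y in 𝓝 x, p y ↔ p x)
    {x y : α} (hx : x ∈ s) (hy : y ∈ s) : p x ↔ p y :=
  hs.induction₂ (fun x y => p x ↔ p y)
    (fun x hx => ((h x hx).filter_mono nhdsWithin_le_nhds).mono fun _ => Iff.symm)
    (fun _ _ _ _ _ _ => Iff.trans) (fun _ _ _ _ => Iff.symm) hx hy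

theorem IsClosed.image_of_norm_sub_le {E : Type*} [NormedAddCommGroup E] [ProperSpace E]
    {f : E → E} {F : Set E} {M : ℝ} (hF : IsClosed F) (hf : ContinuousOn f F)
    (hM : ∀ x ∈ F, ‖f x - x‖ ≤ M) : IsClosed (f '' F) := by
  refine isClosed_of_closure_subset fun v hv => ?_
  set K := F ∩ closedBall v (M + 1)
  have hK : IsCompact (f '' K) :=
    ((isCompact_closedBall v (M + 1)).inter_left hF).image_of_continuousOn
      (hf.mono inter_subset_left)
  have hnear : ball v 1 ∩ f '' F ⊆ f '' K := by
    rintro _ ⟨hy, x, hx, rfl⟩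
    refine ⟨x, ⟨hx, ?_⟩, rfl⟩
    have h₁ : dist x (f x) ≤ M := by rw [dist_comm, dist_eq_norm]; exact hM x hx
    have h₂ : dist (f x) v < 1 := hy
    exact mem_closedBall.mpr <| (dist_triangle x (f x) v).trans (by linarith)
  have hv' : v ∈ closure (f '' K) :=
    closure_mono hnear (isOpen_ball.inter_closure ⟨mem_ball_self one_pos, hv⟩)
  exact image_mono inter_subset_left (hK.isClosed.closure_subset hv')

theorem HasStrictDerivAt.exists_mem_nhds_injOn {f : ℂ → ℂ} {f' a : ℂ}
    (hf : HasStrictDerivAt f f' a) (hf' : f' ≠ 0) : ∃ U ∈ 𝓝 a, InjOn f U :=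
  ⟨_, hf.eventually_left_inverse hf', fun x hx y hy hxy => by
    rw [← show _ = x from hx, ← show _ = y from hy, hxy]⟩

theorem AnalyticAt.exists_pow_eq {g : ℂ → ℂ} {a : ℂ} (hg : AnalyticAt ℂ g a) (ha : g a ≠ 0)
    {n : ℕ} (hn : n ≠ 0) : ∃ r : ℂ → ℂ, AnalyticAt ℂ r a ∧ r a ≠ 0 ∧ ∀ w, r w ^ n = g w := by
  obtain ⟨c, hc⟩ := IsAlgClosed.exists_pow_nat_eq (g a) (Nat.pos_of_ne_zero hn)
  have hc0 : c ≠ 0 := by rintro rfl; exact ha (by rw [← hc, zero_pow hn])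
  refine ⟨fun w => c * (g w / g a) ^ (n⁻¹ : ℂ), ?_, ?_, fun w => ?_⟩
  · refine analyticAt_const.mul ((hg.div analyticAt_const ha).cpow analyticAt_const ?_)
    simp [ha]
  · simpa [ha] using hc0
  · rw [mul_pow, cpow_nat_inv_pow _ hn, hc, mul_div_cancel₀ _ ha]

theorem DifferentiableAt.hasDerivAt_sub_mul {𝕜 : Type*} [NontriviallyNormedField 𝕜]
    {g : 𝕜 → 𝕜} {a : 𝕜} (hg : DifferentiableAt 𝕜 g a) :
    HasDerivAt (fun w => (w - a) * g w) (g a) a := by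
  simpa using ((hasDerivAt_id a).sub_const a).fun_mul hg.hasDerivAt

theorem AnalyticAt.exists_eventuallyEq_add_pow_of_deriv_eq_zero {f : ℂ → ℂ} {a : ℂ}
    (hf : AnalyticAt ℂ f a) (hnc : ¬ ∀ᶠ w in 𝓝 a, f w = f a) (hd : deriv f a = 0) :
    ∃ n : ℕ, 2 ≤ n ∧ ∃ h : ℂ → ℂ, AnalyticAt ℂ h a ∧ h a = 0 ∧ deriv h a ≠ 0 ∧
      ∀ᶠ w in 𝓝 a, f w = f a + h w ^ n := by
  have hf' : AnalyticAt ℂ (fun w => f w - f a) a := hf.sub analyticAt_const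
  obtain ⟨n, g, hg, hga, hfg⟩ :=
    hf'.exists_eventuallyEq_pow_smul_nonzero_iff.mpr (by simpa only [sub_eq_zero] using hnc)
  have hn0 : n ≠ 0 := by
    rintro rfl
    simpa [eq_comm, hga] using hfg.self_of_nhds
  have hn1 : n ≠ 1 := by
    rintro rfl
    have hfg' : (fun w => f w - f a) =ᶠ[𝓝 a] fun w => (w - a) ^ 1 • g w := hfg
    have : deriv (fun w => f w - f a) a = g a := by
      rw [hfg'.deriv_eq]
      simpa using hg.differentiableAt.hasDerivAt_sub_mul.deriv
    exact hga (by rw [← this, deriv_sub_const, hd])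
  obtain ⟨r, hr, hra, hrg⟩ := hg.exists_pow_eq hga hn0
  refine ⟨n, by omega, fun w => (w - a) * r w, (analyticAt_id.sub analyticAt_const).mul hr,
    by simp, by rwa [hr.differentiableAt.hasDerivAt_sub_mul.deriv], ?_⟩
  filter_upwards [hfg] with w hw
  rw [mul_pow, hrg, ← smul_eq_mul, ← hw, add_sub_cancel]

theorem AnalyticAt.eventually_not_subsingleton_of_deriv_eq_zero {f : ℂ → ℂ} {a : ℂ}
    (hf : AnalyticAt ℂ f a) (hnc : ¬ ∀ᶠ w in 𝓝 a, f w = f a) (hd : deriv f a = 0)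
    {U : Set ℂ} (hU : U ∈ 𝓝 a) :
    ∀ᶠ v in 𝓝 (f a), v ≠ f a → ¬ (U ∩ f ⁻¹' {v}).Subsingleton := by
  obtain ⟨n, hn, h, hh, hha, hh', hfh⟩ :=
    hf.exists_eventuallyEq_add_pow_of_deriv_eq_zero hnc hd
  have himage : h '' (U ∩ {w | f w = f a + h w ^ n}) ∈ 𝓝 0 := by
    rw [← hha, ← (hh.hasStrictDerivAt.map_nhds_eq hh')]
    exact image_mem_map (inter_mem hU hfh)
  obtain ⟨δ, hδ, hball⟩ := Metric.mem_nhds_iff.mp himage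
  have hζ := Complex.isPrimitiveRoot_exp n (by omega)
  set ζ := exp (2 * Real.pi * I / n)
  filter_upwards [ball_mem_nhds (f a) (pow_pos hδ n)] with v hv hva
  -- `s` and `ζ s` have the same `n`-th power and both are values of `h` on `U`
  obtain ⟨s, hs⟩ := IsAlgClosed.exists_pow_nat_eq (v - f a) (by omega : 0 < n)
  have hs0 : s ≠ 0 := by
    rintro rfl
    exact hva (sub_eq_zero.mp (by rw [← hs, zero_pow (by omega)]))
  have hsδ : ‖s‖ < δ := by
    refine lt_of_pow_lt_pow_left₀ n hδ.le ?_
    rw [← norm_pow, hs, ← dist_eq_norm]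
    exact hv
  have hζsδ : ‖ζ * s‖ < δ := by rwa [norm_mul, hζ.norm'_eq_one (by omega), one_mul]
  obtain ⟨u₁, ⟨hu₁U, hu₁f⟩, hu₁s⟩ := hball (mem_ball_zero_iff.mpr hsδ)
  obtain ⟨u₂, ⟨hu₂U, hu₂f⟩, hu₂s⟩ := hball (mem_ball_zero_iff.mpr hζsδ)
  have hmem : ∀ u ∈ U, f u = f a + h u ^ n → h u ^ n = s ^ n → u ∈ U ∩ f ⁻¹' {v} :=
    fun u hU hu hus =>
      ⟨hU, by rw [mem_preimage, mem_singleton_iff, hu, hus, hs, add_sub_cancel]⟩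
  intro hsub
  have hu : u₁ = u₂ := hsub (hmem u₁ hu₁U hu₁f (by rw [hu₁s]))
    (hmem u₂ hu₂U hu₂f (by rw [hu₂s, mul_pow, hζ.pow_eq_one, one_mul]))
  apply hζ.ne_one (by omega)
  apply mul_right_cancel₀ hs0
  rw [one_mul, ← hu₂s, ← hu, hu₁s]

structure NearIdentity (ε M : ℝ) (z : ℂ → ℂ) : Prop where
  pos : 0 < ε
  differentiableOn : DifferentiableOn ℂ z {w : ℂ | w.im < ε}
  norm_apply_sub_le : ∀ w : ℂ, w.im < ε → ‖z w - w‖ ≤ M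

def rootsBelow (z : ℂ → ℂ) (v : ℂ) : Set ℂ := {w | w.im < 0 ∧ z w = v}

def HasUniqueSimpleRootBelow (z : ℂ → ℂ) (v : ℂ) : Prop :=
  ∃ w, rootsBelow z v = {w} ∧ deriv z w ≠ 0

lemma HasUniqueSimpleRootBelow.nonempty {z : ℂ → ℂ} {v : ℂ}
    (h : HasUniqueSimpleRootBelow z v) :
    (rootsBelow z v).Nonempty :=
  let ⟨w, hw, _⟩ := h; ⟨w, hw ▸ rfl⟩

lemma HasUniqueSimpleRootBelow.subsingleton {z : ℂ → ℂ} {v : ℂ}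
    (h : HasUniqueSimpleRootBelow z v) :
    (rootsBelow z v).Subsingleton :=
  let ⟨_, hw, _⟩ := h; hw ▸ subsingleton_singleton

namespace NearIdentity

variable {ε M : ℝ} {z : ℂ → ℂ}

lemma nonneg (hz : NearIdentity ε M z) : 0 ≤ M :=
  (norm_nonneg _).trans (hz.norm_apply_sub_le 0 (by simpa using hz.pos))

lemma abs_im_sub_le (hz : NearIdentity ε M z) {w : ℂ} (hw : w.im < ε) :
    |(z w).im - w.im| ≤ M := by
  simpa using (abs_im_le_norm _).trans (hz.norm_apply_sub_le w hw)

lemma im_le_of_im_nonpos (hz : NearIdentity ε M z) {w : ℂ} (hw : w.im ≤ 0) : (z w).im ≤ M := by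
  linarith [(abs_le.mp (hz.abs_im_sub_le (hw.trans_lt hz.pos))).2]

lemma abs_im_le_of_mem_curve (hz : NearIdentity ε M z) {v : ℂ}
    (hv : v ∈ z '' {w : ℂ | w.im = 0}) : |v.im| ≤ M := by
  obtain ⟨w, hw, rfl⟩ := hv
  have hw : w.im = 0 := hw
  simpa [hw] using hz.abs_im_sub_le (w := w) (by rw [hw]; exact hz.pos)

lemma analyticAt (hz : NearIdentity ε M z) {w : ℂ} (hw : w.im < ε) : AnalyticAt ℂ z w :=
  hz.differentiableOn.analyticAt ((isOpen_im_lt _).mem_nhds hw)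

lemma differentiableAt (hz : NearIdentity ε M z) {w : ℂ} (hw : w.im < ε) :
    DifferentiableAt ℂ z w :=
  (hz.analyticAt hw).differentiableAt

lemma not_eventually_eq (hz : NearIdentity ε M z) {w : ℂ} (hw : w.im < ε) :
    ¬ ∀ᶠ u in 𝓝 w, z u = z w := by
  intro hconst
  have hdom : IsPreconnected {u : ℂ | u.im < ε} := (convex_halfSpace_im_lt ε).isPreconnected
  have hEq := (hz.differentiableOn.analyticOnNhd (isOpen_im_lt _)
    ).eqOn_of_preconnected_of_eventuallyEq analyticOnNhd_const hdom hw hconst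
  set u := w - (2 * M + 1 : ℝ)
  have hu : u.im < ε := by simpa [u] using hw
  have h₁ := hz.norm_apply_sub_le w hw
  have h₂ := hz.norm_apply_sub_le u hu
  rw [hEq hu] at h₂
  have : ‖w - u‖ ≤ ‖z w - u‖ + ‖z w - w‖ := by
    simpa using norm_sub_le (z w - u) (z w - w)
  have hwu : ‖w - u‖ = 2 * M + 1 := by
    rw [sub_sub_cancel, norm_real, Real.norm_of_nonneg (by linarith [hz.nonneg])]
  linarith

lemma image_mem_nhds (hz : NearIdentity ε M z) {w : ℂ} (hw : w.im < ε) {U : Set ℂ}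
    (hU : U ∈ 𝓝 w) : z '' U ∈ 𝓝 (z w) :=
  ((hz.analyticAt hw).eventually_constant_or_nhds_le_map_nhds.resolve_left
    (hz.not_eventually_eq hw)) (image_mem_map hU)

lemma isClosed_image (hz : NearIdentity ε M z) {F : Set ℂ} (hF : IsClosed F)
    (hFs : F ⊆ {w : ℂ | w.im ≤ 0}) : IsClosed (z '' F) :=
  hF.image_of_norm_sub_le
    (hz.differentiableOn.continuousOn.mono fun _ hw => (hFs hw).trans_lt hz.pos)
    fun w hw => hz.norm_apply_sub_le w ((hFs hw).trans_lt hz.pos)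

lemma norm_deriv_sub_id_le (hz : NearIdentity ε M z) {w : ℂ} (hw : w.im ≤ -(2 * M + 1)) :
    ‖deriv (fun u => z u - u) w‖ ≤ 1 / 2 := by
  have hR : 0 < 2 * M + 1 := by linarith [hz.nonneg]
  have hball : closedBall w (2 * M + 1) ⊆ {u : ℂ | u.im < ε} := by
    intro u hu
    have : (u - w).im ≤ 2 * M + 1 :=
      (le_abs_self _).trans ((abs_im_le_norm _).trans (mem_closedBall_iff_norm.mp hu))
    have : u.im ≤ 0 := by rw [sub_im] at this; linarith
    exact this.trans_lt hz.pos
  have hcauchy : ‖deriv (fun u => z u - u) w‖ ≤ M / (2 * M + 1) := by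
    refine norm_deriv_le_of_forall_mem_sphere_norm_le hR ?_ fun u hu =>
      hz.norm_apply_sub_le u (hball (sphere_subset_closedBall hu))
    refine ((hz.differentiableOn.sub differentiableOn_id).mono ?_).diffContOnCl
    rwa [closure_ball w hR.ne']
  refine hcauchy.trans ?_
  rw [div_le_iff₀ hR]
  linarith

lemma deriv_ne_zero (hz : NearIdentity ε M z) {w : ℂ} (hw : w.im ≤ -(2 * M + 1)) :
    deriv z w ≠ 0 := by
  have hw' : w.im < ε := by linarith [hz.nonneg, hz.pos]
  have := hz.norm_deriv_sub_id_le hw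
  rw [deriv_fun_sub (hz.differentiableAt hw') differentiableAt_fun_id, deriv_id''] at this
  intro h
  norm_num [h] at this

lemma subsingleton_rootsBelow (hz : NearIdentity ε M z) {v : ℂ} (hv : v.im ≤ -(3 * M + 1)) :
    (rootsBelow z v).Subsingleton := by
  set S := {u : ℂ | u.im ≤ -(2 * M + 1)}
  have hroots : rootsBelow z v ⊆ S := by
    rintro u ⟨hu, rfl⟩
    have := abs_le.mp (hz.abs_im_sub_le (hu.trans hz.pos))
    show u.im ≤ _
    linarith
  have hdiff : ∀ u ∈ S, DifferentiableAt ℂ (fun u => z u - u) u := fun u (hu : u.im ≤ _) =>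
    (hz.differentiableAt (by linarith [hz.nonneg, hz.pos])).sub differentiableAt_id
  intro w₁ hw₁ w₂ hw₂
  have := (convex_halfSpace_im_le _).norm_image_sub_le_of_norm_deriv_le hdiff
    (fun u hu => hz.norm_deriv_sub_id_le hu) (hroots hw₁) (hroots hw₂)
  rw [hw₁.2, hw₂.2, sub_sub_sub_cancel_left, norm_sub_rev] at this
  have : ‖w₂ - w₁‖ = 0 := by linarith [norm_nonneg (w₂ - w₁)]
  exact (sub_eq_zero.mp (norm_eq_zero.mp this)).symm

lemma hasUniqueSimpleRootBelow_apply (hz : NearIdentity ε M z) {w : ℂ}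
    (hw : w.im ≤ -(4 * M + 1)) : HasUniqueSimpleRootBelow z (z w) := by
  have hM := hz.nonneg
  have hzw := abs_le.mp (hz.abs_im_sub_le (w := w) (by linarith [hz.pos]))
  exact ⟨w, (hz.subsingleton_rootsBelow (by linarith)).eq_singleton_of_mem ⟨by linarith, rfl⟩,
    hz.deriv_ne_zero (by linarith)⟩

lemma eventually_rootsBelow_eq_empty (hz : NearIdentity ε M z) {v : ℂ}
    (hv : v ∉ z '' {w : ℂ | w.im = 0}) (h : rootsBelow z v = ∅) :
    ∀ᶠ u in 𝓝 v, rootsBelow z u = ∅ := by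
  have hvF : v ∉ z '' {w : ℂ | w.im ≤ 0} := by
    rintro ⟨w, hw, rfl⟩
    rcases (show w.im ≤ 0 from hw).lt_or_eq with hlt | heq
    · exact h.subset ⟨hlt, rfl⟩
    · exact hv ⟨w, heq, rfl⟩
  filter_upwards [(hz.isClosed_image (isClosed_le continuous_im continuous_const)
    subset_rfl).isOpen_compl.mem_nhds hvF] with u hu
  exact eq_empty_of_forall_notMem fun w hw => hu ⟨w, hw.1.le, hw.2⟩

lemma eventually_nonempty_rootsBelow (hz : NearIdentity ε M z) {v : ℂ}
    (h : (rootsBelow z v).Nonempty) : ∀ᶠ u in 𝓝 v, (rootsBelow z u).Nonempty := by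
  obtain ⟨w, hw, rfl⟩ := h
  filter_upwards [hz.image_mem_nhds (hw.trans hz.pos)
    ((isOpen_im_lt _).mem_nhds hw)] with _ ⟨u, hu, hzu⟩
  exact ⟨u, hu, hzu⟩

lemma eventually_not_subsingleton_rootsBelow (hz : NearIdentity ε M z) {v : ℂ}
    (h : ¬ (rootsBelow z v).Subsingleton) :
    ∀ᶠ u in 𝓝 v, ¬ (rootsBelow z u).Subsingleton := by
  obtain ⟨w₁, ⟨hw₁, rfl⟩, w₂, ⟨hw₂, hzw⟩, hne⟩ : ∃ w₁ ∈ rootsBelow z v, ∃ w₂ ∈ rootsBelow z v,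
      w₁ ≠ w₂ := by simpa [Set.Subsingleton] using h
  obtain ⟨U₁, hU₁, U₂, hU₂, hdisj⟩ := Filter.disjoint_iff.mp (disjoint_nhds_nhds.mpr hne)
  have hH : ∀ {w : ℂ}, w.im < 0 → {u : ℂ | u.im < 0} ∈ 𝓝 w := fun hw =>
    (isOpen_im_lt _).mem_nhds hw
  have h₂ := hz.image_mem_nhds (hw₂.trans hz.pos) (inter_mem hU₂ (hH hw₂))
  rw [hzw] at h₂
  filter_upwards [hz.image_mem_nhds (hw₁.trans hz.pos) (inter_mem hU₁ (hH hw₁)), h₂]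
    with _ ⟨u₁, ⟨hu₁, hu₁H⟩, hzu₁⟩ ⟨u₂, ⟨hu₂, hu₂H⟩, hzu₂⟩ hsub
  exact hdisj.ne_of_mem hu₁ hu₂ (hsub ⟨hu₁H, hzu₁⟩ ⟨hu₂H, hzu₂⟩)

lemma eventually_hasUniqueSimpleRootBelow (hz : NearIdentity ε M z) {v : ℂ}
    (hv : v ∉ z '' {w : ℂ | w.im = 0}) (h : HasUniqueSimpleRootBelow z v) :
    ∀ᶠ u in 𝓝 v, HasUniqueSimpleRootBelow z u := by
  obtain ⟨w₀, hroots, hd⟩ := h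
  obtain ⟨hw₀, rfl⟩ : w₀ ∈ rootsBelow z v := hroots ▸ rfl
  have hw₀ε := hw₀.trans hz.pos
  obtain ⟨U, hU, hinj⟩ := (hz.analyticAt hw₀ε).hasStrictDerivAt.exists_mem_nhds_injOn hd
  have hd' : ∀ᶠ w in 𝓝 w₀, deriv z w ≠ 0 :=
    (hz.analyticAt hw₀ε).deriv.continuousAt.eventually_ne hd
  obtain ⟨t, hts, ht, hw₀t⟩ := _root_.mem_nhds_iff.mp (inter_mem (inter_mem hU hd')
    ((isOpen_im_lt _).mem_nhds hw₀))
  set F := {w : ℂ | w.im ≤ 0} \ t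
  have hvF : z w₀ ∉ z '' F := by
    rintro ⟨w, ⟨hw, hwt⟩, hzw⟩
    rcases (show w.im ≤ 0 from hw).lt_or_eq with hlt | heq
    · exact hwt ((show w ∈ ({w₀} : Set ℂ) from hroots ▸ ⟨hlt, hzw⟩) ▸ hw₀t)
    · exact hv ⟨w, heq, hzw⟩
  filter_upwards [(hz.isClosed_image ((isClosed_le continuous_im continuous_const).sdiff ht)
    sdiff_subset).isOpen_compl.mem_nhds hvF, hz.image_mem_nhds hw₀ε (ht.mem_nhds hw₀t)]
    with u huF ⟨w, hwt, hzw⟩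
  subst hzw
  refine ⟨w, eq_singleton_iff_unique_mem.mpr ⟨⟨(hts hwt).2, rfl⟩, fun w' hw' => ?_⟩,
    (hts hwt).1.2⟩
  have hw't : w' ∈ t := by
    by_contra hw't
    exact huF ⟨w', ⟨hw'.1.le, hw't⟩, hw'.2⟩
  exact hinj (hts hw't).1.1 (hts hwt).1.1 hw'.2

lemma eventually_not_hasUniqueSimpleRootBelow (hz : NearIdentity ε M z) {v : ℂ}
    (hv : v ∉ z '' {w : ℂ | w.im = 0}) (h : ¬ HasUniqueSimpleRootBelow z v) :
    ∀ᶠ u in 𝓝 v, ¬ HasUniqueSimpleRootBelow z u := by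
  rcases (rootsBelow z v).eq_empty_or_nonempty with hempty | ⟨w₀, hw₀⟩
  · filter_upwards [hz.eventually_rootsBelow_eq_empty hv hempty] with u hu hP
    exact (HasUniqueSimpleRootBelow.nonempty hP).ne_empty hu
  by_cases hsub : (rootsBelow z v).Subsingleton
  · have hroots := hsub.eq_singleton_of_mem hw₀
    have hd : deriv z w₀ = 0 := by_contra fun hd => h ⟨w₀, hroots, hd⟩
    obtain ⟨hw₀H, rfl⟩ := hw₀
    have hw₀ε := hw₀H.trans hz.pos
    filter_upwards [(hz.analyticAt hw₀ε).eventually_not_subsingleton_of_deriv_eq_zero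
      (hz.not_eventually_eq hw₀ε) hd
      ((isOpen_im_lt _).mem_nhds hw₀H)] with u hu hP
    by_cases hu₀ : u = z w₀
    · exact h (hu₀ ▸ hP)
    · exact hu hu₀ (HasUniqueSimpleRootBelow.subsingleton hP)
  · filter_upwards [hz.eventually_not_subsingleton_rootsBelow hsub] with u hu hP
    exact hu (HasUniqueSimpleRootBelow.subsingleton hP)

lemma eventually_hasUniqueSimpleRootBelow_iff (hz : NearIdentity ε M z) {v : ℂ}
    (hv : v ∉ z '' {w : ℂ | w.im = 0}) :
    ∀ᶠ u in 𝓝 v, HasUniqueSimpleRootBelow z u ↔ HasUniqueSimpleRootBelow z v := by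
  by_cases h : HasUniqueSimpleRootBelow z v
  · filter_upwards [hz.eventually_hasUniqueSimpleRootBelow hv h] with u hu
      using iff_of_true hu h
  · filter_upwards [hz.eventually_not_hasUniqueSimpleRootBelow hv h] with u hu
      using iff_of_false hu h

lemma eventually_nonempty_rootsBelow_iff (hz : NearIdentity ε M z) {v : ℂ}
    (hv : v ∉ z '' {w : ℂ | w.im = 0}) :
    ∀ᶠ u in 𝓝 v, (rootsBelow z u).Nonempty ↔ (rootsBelow z v).Nonempty := by
  rcases (rootsBelow z v).eq_empty_or_nonempty with h | h
  · filter_upwards [hz.eventually_rootsBelow_eq_empty hv h] with u hu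
    simp [hu, h]
  · filter_upwards [hz.eventually_nonempty_rootsBelow h] with u hu using iff_of_true hu h

lemma subset_connectedComponentIn_of_im_lt (hz : NearIdentity ε M z) {x : ℂ}
    (hx : x.im < -M) :
    {v : ℂ | v.im < -M} ⊆ connectedComponentIn (z '' {w : ℂ | w.im = 0})ᶜ x :=
  (convex_halfSpace_im_lt _).isPreconnected.subset_connectedComponentIn hx fun v hv hvc => by
    linarith [(abs_le.mp (hz.abs_im_le_of_mem_curve hvc)).1, show v.im < -M from hv]

end NearIdentity

theorem stmt10_general (ε M : ℝ) (hε : 0 < ε) (z : ℂ → ℂ)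
    (hz : DifferentiableOn ℂ z {w : ℂ | w.im < ε})
    (hb : ∀ w : ℂ, w.im < ε → ‖z w - w‖ ≤ M)
    (z₀ : ℂ) :
    (z₀ ∈ connectedComponentIn (z '' {w : ℂ | w.im = 0})ᶜ (-(M + 1) * Complex.I) →
      ∃! w : ℂ, w.im < 0 ∧ z w = z₀) ∧
    (z₀ ∈ connectedComponentIn (z '' {w : ℂ | w.im = 0})ᶜ ((M + 1) * Complex.I) →
      ∀ w : ℂ, w.im < 0 → z w ≠ z₀) := by
  have hN : NearIdentity ε M z := ⟨hε, hz, hb⟩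
  have hM := hN.nonneg
  refine ⟨fun hz₀ => ?_, fun hz₀ w hw hzw => ?_⟩
  · set w₀ : ℂ := -(4 * M + 1 : ℂ) * I
    have hw₀ : w₀.im = -(4 * M + 1) := by simp [w₀]
    have hzw₀ := abs_le.mp (hN.abs_im_sub_le (w := w₀) (by linarith))
    have hmem : z w₀ ∈ connectedComponentIn (z '' {w : ℂ | w.im = 0})ᶜ (-(M + 1) * I) :=
      hN.subset_connectedComponentIn_of_im_lt (by simp) (show (z w₀).im < -M by linarith)
    have hiff := isPreconnected_connectedComponentIn.iff_of_eventually_iff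
      (fun v hv => hN.eventually_hasUniqueSimpleRootBelow_iff (connectedComponentIn_subset _ _ hv))
      hmem hz₀
    obtain ⟨w, hw, -⟩ := hiff.mp (hN.hasUniqueSimpleRootBelow_apply hw₀.le)
    exact ⟨w, eq_singleton_iff_unique_mem.mp hw⟩
  · have htop : ((M + 1) * I : ℂ).im = M + 1 := by simp
    have htop_curve : ((M + 1) * I : ℂ) ∉ z '' {w : ℂ | w.im = 0} := fun h => by
      linarith [(abs_le.mp (hN.abs_im_le_of_mem_curve h)).2]
    have hempty : rootsBelow z ((M + 1) * I) = ∅ :=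
      eq_empty_of_forall_notMem fun u hu => by
        linarith [hN.im_le_of_im_nonpos hu.1.le, congrArg Complex.im hu.2]
    have hiff := isPreconnected_connectedComponentIn.iff_of_eventually_iff
      (fun v hv => hN.eventually_nonempty_rootsBelow_iff (connectedComponentIn_subset _ _ hv))
      (mem_connectedComponentIn htop_curve) hz₀
    exact (hiff.mpr ⟨w, hw, hzw⟩).ne_empty hempty

/-- For `z` holomorphic on `{Im w < ε}` with `|z(w) − w| ≤ M` and `ζ = z|_ℝ`
injective: for `z₀` off the curve, the equation `z(w) = z₀` has exactly one
solution in the open lower half-plane if `z₀` lies in the region below the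
curve (the component of the complement containing points with `Im < −M`), and
no solutions if `z₀` lies in the region above the curve. -/
theorem stmt10 (ε M : ℝ) (hε : 0 < ε) (hM : 0 < M) (z : ℂ → ℂ)
    (hz : DifferentiableOn ℂ z {w : ℂ | w.im < ε})
    (hb : ∀ w : ℂ, w.im < ε → ‖z w - w‖ ≤ M)
    (hinj : Function.Injective fun α : ℝ => z (α : ℂ))
    (z₀ : ℂ) (hz₀ : z₀ ∉ z '' {w : ℂ | w.im = 0}) :
    (z₀ ∈ connectedComponentIn (z '' {w : ℂ | w.im = 0})ᶜ (-(M + 1) * Complex.I) →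
      ∃! w : ℂ, w.im < 0 ∧ z w = z₀) ∧
    (z₀ ∈ connectedComponentIn (z '' {w : ℂ | w.im = 0})ᶜ ((M + 1) * Complex.I) →
      ∀ w : ℂ, w.im < 0 → z w ≠ z₀) :=
  stmt10_general ε M hε z hz hb z₀
end

section
/- Let K ∈ Mat_{d×2}(ℝ) have rows that are linearly dependent over ℤ, i.e., there exists a nonzero m ∈ ℤ^d with m^T K = 0. Then there exists a unimodular integer matrix J ∈ GL_d(ℤ) such that the last row of JK is zero. Consequently, if u(x) = Σ_{j∈ℤ^d} û_j e^{i j^T K x} with absolutely summable coefficients, there exist L ∈ Mat_{(d−1)×2}(ℝ) and absolutely summable coefficients v̂_l such that u(x) = Σ_{l∈ℤ^{d−1}} v̂_l e^{i l^T L x} for all x ∈ ℝ². -/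
/-!
The kernel of `j ↦ jᵀK` on `ℤ^{d+1}` is nonzero and saturated (its quotient embeds in a
torsion-free group), so a Smith normal form basis adapted to it contains a kernel vector;
putting that vector last, the basis vectors form the rows of a unimodular `J` with last row of
`JK` zero. Substituting `j = Jᵀk`, the phase `jᵀKx = kᵀ(JK)x` no longer depends on the last
coordinate of `k`, and absolute summability lets us sum over that coordinate first.
-/

open Module Matrix

theorem LinearMap.exists_basis_apply_mem_ker {R M P ι : Type*} [CommRing R] [IsDomain R]
    [IsPrincipalIdealRing R] [AddCommGroup M] [Module R M] [AddCommGroup P] [Module R P]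
    [IsTorsionFree R P] [Finite ι] [DecidableEq ι] (b : Basis ι R M) (f : M →ₗ[R] P)
    (hf : LinearMap.ker f ≠ ⊥) (i₀ : ι) : ∃ b' : Basis ι R M, b' i₀ ∈ LinearMap.ker f := by
  obtain ⟨n, snf⟩ := (LinearMap.ker f).smithNormalForm b
  have := Submodule.nontrivial_iff_ne_bot.mpr hf
  obtain ⟨k⟩ := snf.bN.index_nonempty
  have hk : snf.a k • f (snf.bM (snf.f k)) = 0 := by
    rw [← map_smul, ← snf.snf]
    exact (snf.bN k).2
  refine ⟨snf.bM.reindex (Equiv.swap (snf.f k) i₀), ?_⟩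
  rw [Basis.reindex_apply, Equiv.symm_swap, Equiv.swap_apply_right, LinearMap.mem_ker]
  refine (smul_eq_zero.mp hk).resolve_left fun ha => ?_
  exact snf.bN.ne_zero k (Subtype.ext (by rw [snf.snf, ha, zero_smul]; rfl))

theorem Matrix.exists_isUnit_det_mul_row_eq_zero {ι κ R : Type*} [Fintype ι] [DecidableEq ι]
    [Ring R] [IsAddTorsionFree R] (K : Matrix ι κ R) {m : ι → ℤ} (hm : m ≠ 0)
    (hdep : (Int.cast ∘ m) ᵥ* K = 0) (i₀ : ι) :
    ∃ J : Matrix ι ι ℤ, IsUnit J.det ∧ (J.map (Int.cast : ℤ → R) * K) i₀ = 0 := by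
  let T : (ι → ℤ) →ₗ[ℤ] κ → R :=
    ((vecMulLinear K).toAddMonoidHom.comp ((Int.castAddHom R).compLeft ι)).toIntLinearMap
  have hT : LinearMap.ker T ≠ ⊥ := (Submodule.ne_bot_iff _).mpr ⟨m, hdep, hm⟩
  obtain ⟨b, hb⟩ := T.exists_basis_apply_mem_ker (Pi.basisFun ℤ ι) hT i₀
  have hdet : IsUnit (Matrix.of b).det := by
    have := (Pi.basisFun ℤ ι).isUnit_det b
    rwa [Pi.basisFun_det] at this
  exact ⟨Matrix.of b, hdet, by rw [mul_apply_eq_vecMul]; exact hb⟩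

section ProdSum

variable {α β E : Type*} [NormedRing E] {f : α × β → E}

theorem summable_norm_tsum_prod_of_summable_norm (hf : Summable fun p => ‖f p‖) :
    Summable fun a => ‖∑' b, f (a, b)‖ :=
  ((summable_prod_of_nonneg fun _ => norm_nonneg _).mp hf).2.of_nonneg_of_le
    (fun _ => norm_nonneg _) fun a => norm_tsum_le_tsum_norm (hf.prod_factor a)

theorem tsum_prod_mul_comp_fst [CompleteSpace E] (hf : Summable fun p => ‖f p‖) {g : α → E}
    {C : ℝ} (hg : ∀ a, ‖g a‖ ≤ C) : ∑' p, f p * g p.1 = ∑' a, (∑' b, f (a, b)) * g a := by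
  have hfg : Summable fun p => f p * g p.1 :=
    .of_norm_bounded (hf.mul_right C) fun p => (norm_mul_le _ _).trans (by gcongr; exact hg _)
  rw [hfg.tsum_prod' fun a => (hf.prod_factor a).of_norm.mul_right (g a)]
  exact tsum_congr fun a => (hf.prod_factor a).of_norm.tsum_mul_right (g a)

end ProdSum

theorem Matrix.vecMul_eq_vecMul_init_of_last_eq_zero {n : ℕ} {κ R : Type*} [Semiring R]
    {M : Matrix (Fin (n + 1)) κ R} (h : M (Fin.last n) = 0) (v : Fin (n + 1) → R) :
    v ᵥ* M = Fin.init v ᵥ* M.submatrix Fin.castSucc id := by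
  ext c
  simp [vecMul, dotProduct, Fin.sum_univ_castSucc, h, Fin.init]

theorem Matrix.intCast_vecMul_vecMul {ι κ R : Type*} [Fintype ι] [Ring R] (k : ι → ℤ)
    (J : Matrix ι ι ℤ) (K : Matrix ι κ R) :
    (Int.cast ∘ (k ᵥ* J) : ι → R) ᵥ* K = (Int.cast ∘ k) ᵥ* (J.map (Int.cast : ℤ → R) * K) := by
  rw [← vecMul_vecMul]
  congr 1
  ext i
  exact (Int.castRingHom R).map_vecMul J k i

noncomputable def Matrix.vecMulEquivOfIsUnitDet {ι R : Type*} [Fintype ι] [DecidableEq ι]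
    [CommRing R] {J : Matrix ι ι R} (hJ : IsUnit J.det) : (ι → R) ≃ (ι → R) :=
  have hJ' : IsUnit J := (isUnit_iff_isUnit_det J).mpr hJ
  .ofBijective J.vecMul ⟨vecMul_injective_of_isUnit hJ', vecMul_surjective_iff_isUnit.mpr hJ'⟩

section Reduction

variable {d : ℕ} {κ R E : Type*} [Ring R] [NormedRing E]

noncomputable def Matrix.snocVecMulEquiv {J : Matrix (Fin (d + 1)) (Fin (d + 1)) ℤ}
    (hJ : IsUnit J.det) : (Fin d → ℤ) × ℤ ≃ (Fin (d + 1) → ℤ) :=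
  ((Equiv.prodComm _ _).trans (Fin.snocEquiv fun _ => ℤ)).trans (vecMulEquivOfIsUnitDet hJ)

theorem Matrix.snocVecMulEquiv_apply {J : Matrix (Fin (d + 1)) (Fin (d + 1)) ℤ}
    (hJ : IsUnit J.det) (p : (Fin d → ℤ) × ℤ) : snocVecMulEquiv hJ p = Fin.snoc p.1 p.2 ᵥ* J :=
  rfl

/-- The paper's `v̂_l = Σ_{l_d} û_{Jᵀ(l; l_d)}`. -/
noncomputable def reducedCoeff (J : Matrix (Fin (d + 1)) (Fin (d + 1)) ℤ)
    (uhat : (Fin (d + 1) → ℤ) → E) (l : Fin d → ℤ) : E :=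
  ∑' n : ℤ, uhat (Fin.snoc l n ᵥ* J)

theorem summable_norm_reducedCoeff {J : Matrix (Fin (d + 1)) (Fin (d + 1)) ℤ}
    (hJ : IsUnit J.det) {uhat : (Fin (d + 1) → ℤ) → E} (hsum : Summable fun j => ‖uhat j‖) :
    Summable fun l => ‖reducedCoeff J uhat l‖ := by
  have h : Summable fun p => ‖uhat (snocVecMulEquiv hJ p)‖ :=
    (snocVecMulEquiv hJ).summable_iff.mpr hsum
  simpa only [reducedCoeff, snocVecMulEquiv_apply]
    using summable_norm_tsum_prod_of_summable_norm h

theorem tsum_mul_vecMul_eq_tsum_reducedCoeff_mul [CompleteSpace E]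
    {J : Matrix (Fin (d + 1)) (Fin (d + 1)) ℤ} (hJ : IsUnit J.det) {K : Matrix (Fin (d + 1)) κ R}
    (hlast : (J.map (Int.cast : ℤ → R) * K) (Fin.last d) = 0) {uhat : (Fin (d + 1) → ℤ) → E}
    (hsum : Summable fun j => ‖uhat j‖) {φ : (κ → R) → E} {C : ℝ} (hφ : ∀ y, ‖φ y‖ ≤ C) :
    ∑' j, uhat j * φ ((Int.cast ∘ j) ᵥ* K) = ∑' l, reducedCoeff J uhat l *
      φ ((Int.cast ∘ l) ᵥ* (J.map (Int.cast : ℤ → R) * K).submatrix Fin.castSucc id) := by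
  set L := (J.map (Int.cast : ℤ → R) * K).submatrix Fin.castSucc id
  have hphase (p : (Fin d → ℤ) × ℤ) :
      (Int.cast ∘ snocVecMulEquiv hJ p) ᵥ* K = (Int.cast ∘ p.1) ᵥ* L := by
    rw [snocVecMulEquiv_apply, intCast_vecMul_vecMul, vecMul_eq_vecMul_init_of_last_eq_zero hlast]
    congr 1
    ext i
    simp [Fin.init]
  have h : Summable fun p => ‖uhat (snocVecMulEquiv hJ p)‖ :=
    (snocVecMulEquiv hJ).summable_iff.mpr hsum
  rw [← (snocVecMulEquiv hJ).tsum_eq]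
  simp only [hphase]
  rw [tsum_prod_mul_comp_fst h (g := fun l => φ ((Int.cast ∘ l) ᵥ* L)) fun _ => hφ _]
  simp only [reducedCoeff, snocVecMulEquiv_apply]

end Reduction

/-- If the rows of `K ∈ Mat_{(d+1)×2}(ℝ)` are linearly dependent over `ℤ`,
there is a unimodular integer matrix `J` with the last row of `JK` zero;
consequently any quasi-periodic sum `u(x) = Σ_j û_j e^{i j^T K x}` with
absolutely summable coefficients can be rewritten with `d` quasi-periods:
`u(x) = Σ_l v̂_l e^{i l^T L x}` for some `L ∈ Mat_{d×2}(ℝ)` and absolutely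
summable `v̂`. -/
theorem stmt17 (d : ℕ) (K : Matrix (Fin (d + 1)) (Fin 2) ℝ)
    (m : Fin (d + 1) → ℤ) (hm : m ≠ 0)
    (hdep : ∀ c : Fin 2, ∑ i, (m i : ℝ) * K i c = 0)
    (uhat : (Fin (d + 1) → ℤ) → ℂ)
    (hsum : Summable fun j : Fin (d + 1) → ℤ => ‖uhat j‖)
    (u : (Fin 2 → ℝ) → ℂ)
    (hu : ∀ x : Fin 2 → ℝ, u x = ∑' j : Fin (d + 1) → ℤ,
      uhat j * Complex.exp (Complex.I *
        ((∑ c, (∑ i, (j i : ℝ) * K i c) * x c : ℝ) : ℂ))) :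
    (∃ J : Matrix (Fin (d + 1)) (Fin (d + 1)) ℤ, IsUnit J.det ∧
      ∀ c : Fin 2, ((J.map (fun n : ℤ => (n : ℝ))) * K) (Fin.last d) c = 0) ∧
    (∃ L : Matrix (Fin d) (Fin 2) ℝ, ∃ vhat : (Fin d → ℤ) → ℂ,
      (Summable fun l : Fin d → ℤ => ‖vhat l‖) ∧
      ∀ x : Fin 2 → ℝ, u x = ∑' l : Fin d → ℤ,
        vhat l * Complex.exp (Complex.I *
          ((∑ c, (∑ i, (l i : ℝ) * L i c) * x c : ℝ) : ℂ))) := by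
  obtain ⟨J, hJ, hlast⟩ := exists_isUnit_det_mul_row_eq_zero K hm (funext hdep) (Fin.last d)
  refine ⟨⟨J, hJ, congrFun hlast⟩, (J.map (Int.cast : ℤ → ℝ) * K).submatrix Fin.castSucc id,
    reducedCoeff J uhat, summable_norm_reducedCoeff hJ hsum, fun x => ?_⟩
  rw [hu x]
  refine tsum_mul_vecMul_eq_tsum_reducedCoeff_mul hJ hlast hsum
    (φ := fun y => Complex.exp (Complex.I * ((y ⬝ᵥ x : ℝ) : ℂ))) (C := 1) fun y => ?_
  rw [mul_comm]
  exact (Complex.norm_exp_ofReal_mul_I _).le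
end
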